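/- arXiv:1607.00049 — 9 statements merged into one kernel-verified Lean document; each statement's English description precedes it below -/
import Mathlib

section
/- Let G be a metric group, K ⊆ G compact, and μ an outer regular Borel measure on G. Then the map m_K : t ↦ μ(Kt) is upper semicontinuous on G. -/
open Set Filter Topology Pointwise MeasureTheory

/-! Outer regularity puts an open `U` of measure `< c` around `K t₀`. Since `K t₀` is compact,
`K t₀ V ⊆ U` for some neighbourhood `V` of `1`, so `K t ⊆ U` for every `t ∈ t₀ V`. -/

theorem upperSemicontinuous_measure_of_eventually_subset {X α : Type*} [TopologicalSpace X]
    [TopologicalSpace α] [MeasurableSpace α] (μ : Measure α) [μ.OuterRegular] {f : X → Set α}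
    (hf : ∀ x U, IsOpen U → f x ⊆ U → ∀ᶠ y in 𝓝 x, f y ⊆ U) :
    UpperSemicontinuous fun x => μ (f x) := by
  intro x c hc
  obtain ⟨U, hfU, hU, hμU⟩ := (f x).exists_isOpen_lt_of_lt c hc
  filter_upwards [hf x U hU hfU] with y hy
  exact (measure_mono hy).trans_lt hμU

theorem IsCompact.eventually_mul_singleton_subset {G : Type*} [Group G] [TopologicalSpace G]
    [IsTopologicalGroup G] {K U : Set G} (hK : IsCompact K) (hU : IsOpen U) {t₀ : G}
    (hKU : K * {t₀} ⊆ U) : ∀ᶠ t in 𝓝 t₀, K * {t} ⊆ U := by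
  obtain ⟨V, hV, hKV⟩ := compact_open_separated_mul_right (hK.mul isCompact_singleton) hU hKU
  have h_tendsto : Tendsto (t₀⁻¹ * ·) (𝓝 t₀) (𝓝 1) :=
    (continuous_const_mul t₀⁻¹).tendsto' t₀ 1 (inv_mul_cancel t₀)
  filter_upwards [h_tendsto hV] with t ht
  calc K * {t} = K * {t₀} * {t₀⁻¹ * t} := by
        rw [mul_assoc, singleton_mul_singleton, mul_inv_cancel_left]
    _ ⊆ K * {t₀} * V := mul_subset_mul_left (singleton_subset_iff.2 (mem_preimage.1 ht))
    _ ⊆ U := hKV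

theorem measure_translate_upperSemicontinuous_general
    {G : Type*} [Group G] [MetricSpace G] [IsTopologicalGroup G]
    [MeasurableSpace G]
    (μ : Measure G) [μ.OuterRegular]
    (K : Set G) (hK : IsCompact K) :
    UpperSemicontinuous fun t : G => μ (K * {t}) :=
  upperSemicontinuous_measure_of_eventually_subset μ fun _ _ hU hKU =>
    hK.eventually_mul_singleton_subset hU hKU

/-- For a metric group `G` with left-invariant metric, compact `K` and an outer
regular Borel measure `μ`, the map `t ↦ μ(Kt)` is upper semicontinuous. -/
theorem measure_translate_upperSemicontinuous
    {G : Type*} [Group G] [MetricSpace G] [IsTopologicalGroup G]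
    [MeasurableSpace G] [BorelSpace G]
    (hinv : ∀ g x y : G, dist (g * x) (g * y) = dist x y)
    (μ : Measure G) [μ.OuterRegular]
    (K : Set G) (hK : IsCompact K) :
    UpperSemicontinuous fun t : G => μ (K * {t}) :=
  measure_translate_upperSemicontinuous_general μ K hK
end

section
/- Let G be a metric group, μ a finitely additive regular probability measure, and K ⊆ G compact with μ(K) > 0. If μ₋(K) := sup_{δ>0} inf{μ(Kt) : ‖t‖ < δ} > 0, then there exists δ > 0 with K ∩ Kt ≠ ∅ for all t with ‖t‖ < δ, i.e., B_δ ⊆ K⁻¹K; in particular, G is locally compact. -/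
/-!
If `K` and its translate `Kz` were disjoint, finite additivity would give
`μ (K ∪ Kz) = μ K + μ (Kz) ≥ μ K + r`, where `r > 0` bounds `μ (Kz)` from below for small `z`.
Outer regularity yields an open `U ⊇ K` with `μ U < μ K + r`, and by compactness `U` contains a
thickening of `K`, hence, by left invariance of the metric, every translate `Kz` with `z` small.
So `K ∩ Kz ≠ ∅`, i.e. `z ∈ K⁻¹K`, for all small `z`; the compact set `K⁻¹K` is then a
neighbourhood of `1`.
-/

open Set Filter Pointwise Metric

theorem Real.exists_pos_mem_of_sSup_pos {S : Set ℝ} (h : 0 < sSup S) : ∃ r ∈ S, 0 < r :=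
  exists_lt_of_lt_csSup (nonempty_iff_ne_empty.2 (by rintro rfl; simp at h)) h

theorem inter_nonempty_of_lt_add_of_subset {α : Type*} (μ : Set α → ℝ)
    (hmono : ∀ A B : Set α, A ⊆ B → μ A ≤ μ B)
    (hadd : ∀ A B : Set α, Disjoint A B → μ (A ∪ B) = μ A + μ B)
    {A B U : Set α} (hA : A ⊆ U) (hB : B ⊆ U) (hlt : μ U < μ A + μ B) : (A ∩ B).Nonempty := by
  by_contra hempty
  have hunion := hadd A B (disjoint_iff_inter_eq_empty.2 (not_nonempty_iff_eq_empty.1 hempty))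
  have hle := hmono _ _ (union_subset hA hB)
  linarith

theorem mem_inv_mul_of_inter_mul_singleton_nonempty {G : Type*} [Group G] {s t : Set G} {z : G}
    (h : (s ∩ (t * {z})).Nonempty) : z ∈ t⁻¹ * s := by
  obtain ⟨x, hxs, hxt⟩ := h
  obtain ⟨k, hk, rfl⟩ := mul_singleton (b := z) ▸ hxt
  exact ⟨k⁻¹, inv_mem_inv.2 hk, k * z, hxs, by group⟩

section LeftInvariant

variable {G : Type*} [Group G] [MetricSpace G]

theorem mul_singleton_subset_thickening
    (hinv : ∀ g x y : G, dist (g * x) (g * y) = dist x y) {K : Set G} {z : G} {ε : ℝ}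
    (hz : dist z 1 < ε) :
    K * {z} ⊆ thickening ε K := by
  rw [mul_singleton]
  rintro _ ⟨k, hk, rfl⟩
  refine mem_thickening_iff.2 ⟨k, hk, ?_⟩
  rwa [← hinv k z 1, mul_one] at hz

theorem exists_ball_forall_inter_mul_singleton_nonempty
    (hinv : ∀ g x y : G, dist (g * x) (g * y) = dist x y) (μ : Set G → ℝ)
    (hmono : ∀ A B : Set G, A ⊆ B → μ A ≤ μ B)
    (hadd : ∀ A B : Set G, Disjoint A B → μ (A ∪ B) = μ A + μ B)
    {K : Set G} (hK : IsCompact K)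
    (houter : ∀ ε > (0 : ℝ), ∃ U : Set G, IsOpen U ∧ K ⊆ U ∧ μ U < μ K + ε)
    {r δ : ℝ} (hr : 0 < r) (hδ : 0 < δ) (hlower : ∀ z ∈ ball (1 : G) δ, r ≤ μ (K * {z})) :
    ∃ δ' > 0, ∀ z ∈ ball (1 : G) δ', (K ∩ (K * {z})).Nonempty := by
  obtain ⟨U, hUopen, hKU, hUlt⟩ := houter r hr
  obtain ⟨ε, hε, hthick⟩ := hK.exists_thickening_subset_open hUopen hKU
  refine ⟨min δ ε, lt_min hδ hε, fun z hz => ?_⟩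
  have hzδ : dist z 1 < δ := (mem_ball.1 hz).trans_le (min_le_left _ _)
  have hzε : dist z 1 < ε := (mem_ball.1 hz).trans_le (min_le_right _ _)
  have hKzU : K * {z} ⊆ U := (mul_singleton_subset_thickening hinv hzε).trans hthick
  have hKz := hlower z (mem_ball.2 hzδ)
  exact inter_nonempty_of_lt_add_of_subset μ hmono hadd hKU hKzU (by linarith)

end LeftInvariant

theorem subcontinuity_locally_compact_general
    {G : Type*} [Group G] [MetricSpace G] [IsTopologicalGroup G]
    (hinv : ∀ g x y : G, dist (g * x) (g * y) = dist x y)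
    (μ : Set G → ℝ)
    (hmono : ∀ A B : Set G, A ⊆ B → μ A ≤ μ B)
    (hadd : ∀ A B : Set G, Disjoint A B → μ (A ∪ B) = μ A + μ B)
    (hnn : ∀ A : Set G, 0 ≤ μ A)
    (houter : ∀ C : Set G, IsCompact C → ∀ ε > (0 : ℝ),
      ∃ U : Set G, IsOpen U ∧ C ⊆ U ∧ μ U < μ C + ε)
    (K : Set G) (hK : IsCompact K)
    (hμminus : 0 < sSup {r : ℝ | ∃ δ > (0 : ℝ),
      r = sInf ((fun z : G => μ (K * {z})) '' Metric.ball (1 : G) δ)}) :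
    (∃ δ > (0 : ℝ), (∀ z ∈ Metric.ball (1 : G) δ, (K ∩ K * {z}).Nonempty) ∧
      Metric.ball (1 : G) δ ⊆ K⁻¹ * K) ∧ LocallyCompactSpace G := by
  obtain ⟨_, ⟨δ, hδ, rfl⟩, hr⟩ := Real.exists_pos_mem_of_sSup_pos hμminus
  have hlower : ∀ z ∈ ball (1 : G) δ,
      sInf ((fun z : G => μ (K * {z})) '' ball 1 δ) ≤ μ (K * {z}) := fun z hz =>
    csInf_le ⟨0, forall_mem_image.2 fun _ _ => hnn _⟩ (mem_image_of_mem _ hz)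
  obtain ⟨δ', hδ', hmeet⟩ := exists_ball_forall_inter_mul_singleton_nonempty hinv μ hmono hadd hK
    (houter K hK) hr hδ hlower
  have hball : ball (1 : G) δ' ⊆ K⁻¹ * K := fun z hz =>
    mem_inv_mul_of_inter_mul_singleton_nonempty (hmeet z hz)
  refine ⟨⟨δ', hδ', fun z hz => ?_, hball⟩,
    (hK.inv.mul hK).locallyCompactSpace_of_mem_nhds_of_group
      (mem_of_superset (ball_mem_nhds 1 hδ') hball)⟩
  rw [inter_self]
  exact ((hmeet z hz).mono inter_subset_left).mul (singleton_nonempty z)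

/-- If `μ₋(K) = sup_{δ>0} inf {μ(Kt) : ‖t‖ < δ} > 0` for a finitely additive
regular probability measure `μ` and compact `K` with `μ K > 0`, then some ball
`B_δ` satisfies `K ∩ Kt ≠ ∅` for all `t ∈ B_δ`, i.e. `B_δ ⊆ K⁻¹K`;
in particular `G` is locally compact. -/
theorem subcontinuity_locally_compact
    {G : Type*} [Group G] [MetricSpace G] [IsTopologicalGroup G]
    (hinv : ∀ g x y : G, dist (g * x) (g * y) = dist x y)
    (μ : Set G → ℝ)
    (hmono : ∀ A B : Set G, A ⊆ B → μ A ≤ μ B)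
    (hadd : ∀ A B : Set G, Disjoint A B → μ (A ∪ B) = μ A + μ B)
    (hnn : ∀ A : Set G, 0 ≤ μ A) (hprob : μ Set.univ = 1)
    (houter : ∀ C : Set G, IsCompact C → ∀ ε > (0 : ℝ),
      ∃ U : Set G, IsOpen U ∧ C ⊆ U ∧ μ U < μ C + ε)
    (K : Set G) (hK : IsCompact K) (hKpos : 0 < μ K)
    (hμminus : 0 < sSup {r : ℝ | ∃ δ > (0 : ℝ),
      r = sInf ((fun z : G => μ (K * {z})) '' Metric.ball (1 : G) δ)}) :
    (∃ δ > (0 : ℝ), (∀ z ∈ Metric.ball (1 : G) δ, (K ∩ K * {z}).Nonempty) ∧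
      Metric.ball (1 : G) δ ⊆ K⁻¹ * K) ∧ LocallyCompactSpace G :=
  subcontinuity_locally_compact_general hinv μ hmono hadd hnn houter K hK hμminus
end

section
/- Let G be a metric group, μ a Borel regular measure, and K ⊆ G compact. If the identity 1_G is not an interior point of K⁻¹K, then μ₋(K) := sup_{δ>0} inf{μ(Kt) : ‖t‖ < δ} = 0; equivalently, there is a sequence t_n → 1_G with μ(K t_n) → 0. -/
open Set Filter Topology Pointwise MeasureTheory

/-!
If `t ∉ K⁻¹K` then `Kt` is disjoint from `K`. By outer regularity there is an open `U ⊇ K`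
with `μ U < μ K + ε`, and by compactness `Kt ⊆ U` for all `t` near `1`. Since `1` is not an
interior point of `K⁻¹K`, such `t` can be taken arbitrarily close to `1`, and then
`μ K + μ (Kt) ≤ μ U < μ K + ε`. Hence `t ↦ μ (Kt)` has `liminf` zero at `1`.
-/

theorem Set.disjoint_mul_singleton_of_notMem_inv_mul {G : Type*} [Group G] {K : Set G} {t : G}
    (ht : t ∉ K⁻¹ * K) : Disjoint K (K * {t}) := by
  rw [mul_singleton, disjoint_right]
  rintro _ ⟨k, hk, rfl⟩ hkt
  exact ht ⟨k⁻¹, inv_mem_inv.2 hk, k * t, hkt, by group⟩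

section

variable {G : Type*} [Group G] [TopologicalSpace G] [IsTopologicalGroup G] [T2Space G]
  [MeasurableSpace G] [OpensMeasurableSpace G] (μ : Measure G) [μ.OuterRegular]
  {K : Set G}

theorem frequently_measure_mul_singleton_lt (hK : IsCompact K) (hKfin : μ K ≠ ⊤)
    (hint : (1 : G) ∉ interior (K⁻¹ * K)) {ε : ENNReal} (hε : ε ≠ 0) :
    ∃ᶠ t in 𝓝 1, μ (K * {t}) < ε := by
  obtain ⟨U, hKU, hU, hμU⟩ := K.exists_isOpen_lt_add hKfin hε
  obtain ⟨V, hV, hKV⟩ := compact_open_separated_mul_right hK hU hKU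
  have hfreq : ∃ᶠ t in 𝓝 (1 : G), t ∉ K⁻¹ * K := by
    rwa [mem_interior_iff_mem_nhds, ← eventually_mem_set, not_eventually] at hint
  refine (hfreq.and_eventually hV).mono fun t ⟨htK, htV⟩ => ?_
  have hKtU : K ∪ K * {t} ⊆ U :=
    union_subset hKU ((mul_subset_mul_left (singleton_subset_iff.2 htV)).trans hKV)
  refine (ENNReal.add_lt_add_iff_left hKfin).1 ?_
  calc μ K + μ (K * {t})
      = μ (K ∪ K * {t}) := (measure_union' (disjoint_mul_singleton_of_notMem_inv_mul htK)
          hK.measurableSet).symm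
    _ ≤ μ U := measure_mono hKtU
    _ < μ K + ε := hμU

theorem liminf_measure_mul_singleton_eq_zero (hK : IsCompact K) (hKfin : μ K ≠ ⊤)
    (hint : (1 : G) ∉ interior (K⁻¹ * K)) :
    liminf (fun t => μ (K * {t})) (𝓝 1) = 0 :=
  nonpos_iff_eq_zero.1 <| le_of_forall_gt_imp_ge_of_dense fun _ hε =>
    liminf_le_of_frequently_le' <|
      (frequently_measure_mul_singleton_lt μ hK hKfin hint hε.ne').mono fun _ h => h.le

end

theorem mospan_property_general
    {G : Type*} [Group G] [MetricSpace G] [IsTopologicalGroup G]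
    [MeasurableSpace G] [BorelSpace G]
    (μ : Measure G) [μ.OuterRegular]
    (K : Set G) (hK : IsCompact K) (hKfin : μ K < ⊤)
    (hint : (1 : G) ∉ interior (K⁻¹ * K)) :
    (⨆ (δ : ℝ) (_ : 0 < δ), ⨅ (z : G) (_ : z ∈ Metric.ball (1 : G) δ),
        μ (K * {z})) = 0 ∧
      ∃ t : ℕ → G, Tendsto t atTop (𝓝 1) ∧
        Tendsto (fun n => μ (K * {t n})) atTop (𝓝 0) := by
  have hliminf := liminf_measure_mul_singleton_eq_zero μ hK hKfin.ne hint
  refine ⟨Metric.nhds_basis_ball.liminf_eq_iSup_iInf.symm.trans hliminf, ?_⟩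
  obtain ⟨t, hμt, ht⟩ := exists_seq_tendsto_liminf (f := 𝓝 (1 : G)) (u := fun t => μ (K * {t}))
  exact ⟨t, ht, hliminf ▸ hμt⟩

/-- Mospan property: if `1` is not an interior point of `K⁻¹K`, then
`μ₋(K) = 0`; equivalently there is a null sequence `t_n → 1` with
`μ(K t_n) → 0`. -/
theorem mospan_property
    {G : Type*} [Group G] [MetricSpace G] [IsTopologicalGroup G]
    [MeasurableSpace G] [BorelSpace G]
    (hinv : ∀ g x y : G, dist (g * x) (g * y) = dist x y)
    (μ : Measure G) [μ.OuterRegular]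
    (K : Set G) (hK : IsCompact K) (hKfin : μ K < ⊤)
    (hint : (1 : G) ∉ interior (K⁻¹ * K)) :
    (⨆ (δ : ℝ) (_ : 0 < δ), ⨅ (z : G) (_ : z ∈ Metric.ball (1 : G) δ),
        μ (K * {z})) = 0 ∧
      ∃ t : ℕ → G, Tendsto t atTop (𝓝 1) ∧
        Tendsto (fun n => μ (K * {t n})) atTop (𝓝 0) :=
  mospan_property_general μ K hK hKfin hint
end

section
/- Let G be a Polish group, μ a regular Borel measure on G, and K ⊆ G compact with μ(K) > 0. Suppose there is a sequence t_n → 1_G with μ(K t_n) = 0 for all n. Then there is a Borel set C ⊆ K with μ(K \ C) = 0 such that C⁻¹C has empty interior. -/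
/-!
Removing from `K` its (null) right translates `K tₙ` leaves a full-measure `C₀ ⊆ K` with
`C₀ ∩ C₀ tₙ = ∅`, so `tₙ ∉ C₀⁻¹C₀`. If `C₀⁻¹C₀` still has interior, `G` is locally compact, and
Steinhaus' theorem forces `C₀` to be Haar-null. Fubini then shows `μ (C₀ ∩ C₀ s) = 0` for Haar-a.e.
`s`, hence for a countable dense set of `s`; removing these null pieces from `C₀` gives a set `C`
with `C ∩ C s = ∅` for a dense set of `s`, i.e. `C⁻¹C` misses a dense set.
-/

open Set Filter Topology Pointwise MeasureTheory

section Group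

variable {G : Type*} [Group G]

theorem Set.mul_singleton_eq_preimage (A : Set G) (s : G) : A * {s} = (· * s⁻¹) ⁻¹' A := by
  rw [mul_singleton, image_mul_right]

theorem Set.mem_inv_mul_self_iff_not_disjoint {C : Set G} {s : G} :
    s ∈ C⁻¹ * C ↔ ¬Disjoint C (C * {s}) := by
  simp only [mul_singleton_eq_preimage, not_disjoint_iff, mem_preimage, mem_mul, mem_inv]
  constructor
  · rintro ⟨a, ha, b, hb, rfl⟩
    exact ⟨b, hb, by simpa using ha⟩
  · rintro ⟨x, hx, hxs⟩
    exact ⟨s * x⁻¹, by simpa using hxs, x, hx, by group⟩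

theorem interior_inv_mul_self_eq_empty_of_dense [TopologicalSpace G] {C D : Set G}
    (hD : Dense D) (hdisj : ∀ s ∈ D, Disjoint C (C * {s})) : interior (C⁻¹ * C) = ∅ :=
  interior_eq_empty_iff_dense_compl.2 <| hD.mono fun s hs =>
    mem_inv_mul_self_iff_not_disjoint.not_left.2 (hdisj s hs)

end Group

section Measure

variable {G : Type*} [Group G] [MeasurableSpace G] {μ : Measure G}

theorem exists_subset_disjoint_mul_singleton [MeasurableMul G] {ι : Type*} [Countable ι]
    {A : Set G} (hA : MeasurableSet A) {t : ι → G} (hnull : ∀ i, μ (A ∩ (A * {t i})) = 0) :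
    ∃ C ⊆ A, MeasurableSet C ∧ μ (A \ C) = 0 ∧ ∀ i, Disjoint C (C * {t i}) := by
  refine ⟨A \ ⋃ i, A * {t i}, sdiff_subset, ?_, ?_, fun i => ?_⟩
  · refine hA.diff (.iUnion fun i => ?_)
    rw [mul_singleton_eq_preimage]
    exact hA.preimage (measurable_mul_const _)
  · rw [sdiff_sdiff_right_self, inter_iUnion]
    exact measure_iUnion_null hnull
  · refine disjoint_left.2 fun x hx hxt => hx.2 (mem_iUnion.2 ⟨i, ?_⟩)
    exact mul_subset_mul_right sdiff_subset hxt

theorem exists_subset_interior_inv_mul_self_eq_empty [MeasurableMul G] [TopologicalSpace G]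
    [SecondCountableTopology G] {A : Set G} (hA : MeasurableSet A)
    (hdense : Dense {s | μ (A ∩ (A * {s})) = 0}) :
    ∃ C ⊆ A, MeasurableSet C ∧ μ (A \ C) = 0 ∧ interior (C⁻¹ * C) = ∅ := by
  obtain ⟨D, hDsub, hDcount, hD⟩ := hdense.exists_countable_dense_subset
  have := hDcount.to_subtype
  obtain ⟨C, hCA, hC, hAC, hdisj⟩ :=
    exists_subset_disjoint_mul_singleton hA (t := ((↑) : D → G)) fun s => hDsub s.2
  exact ⟨C, hCA, hC, hAC, interior_inv_mul_self_eq_empty_of_dense hD fun s hs => hdisj ⟨s, hs⟩⟩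

theorem ae_measure_inter_mul_singleton_eq_zero [MeasurableMul₂ G] [MeasurableInv G]
    {ν : Measure G} [SFinite μ] [SFinite ν] [μ.IsMulLeftInvariant] {C : Set G}
    (hC : MeasurableSet C) (hμC : μ C⁻¹ = 0) : ∀ᵐ s ∂μ, ν (C ∩ (C * {s})) = 0 := by
  have hslice (x : G) : ∀ᵐ s ∂μ, ¬(x ∈ C ∧ x * s⁻¹ ∈ C) := by
    refine measure_mono_null (fun s hs => ?_) ((measure_mul_right_null μ x⁻¹).2 hμC)
    simpa using (not_not.1 hs).2
  have hmeas : MeasurableSet {p : G × G | p.1 ∈ C ∧ p.1 * p.2⁻¹ ∈ C} :=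
    (hC.preimage measurable_fst).inter (hC.preimage (measurable_fst.mul measurable_snd.inv))
  filter_upwards [(Measure.ae_ae_comm hmeas.compl).1 (ae_of_all ν hslice)] with s hs
  rw [mul_singleton_eq_preimage]
  exact measure_eq_zero_iff_ae_notMem.2 hs

end Measure

theorem measure_inv_eq_zero_of_inv_mul_self_notMem_nhds {G : Type*} [Group G]
    [TopologicalSpace G] [IsTopologicalGroup G] [LocallyCompactSpace G] [MeasurableSpace G]
    [BorelSpace G] (μ : Measure G) [μ.IsHaarMeasure]
    [μ.InnerRegular] {C : Set G} (hC : MeasurableSet C) (h : C⁻¹ * C ∉ 𝓝 1) : μ C⁻¹ = 0 := by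
  by_contra hne
  refine h ?_
  simpa only [div_eq_mul_inv, inv_inv] using
    Measure.div_mem_nhds_one_of_haar_pos μ C⁻¹ hC.inv (pos_iff_ne_zero.2 hne)

theorem mospan_converse_general
    {G : Type*} [Group G] [TopologicalSpace G] [PolishSpace G]
    [IsTopologicalGroup G] [MeasurableSpace G] [BorelSpace G]
    (μ : Measure G) [μ.Regular]
    (K : Set G) (hK : IsCompact K)
    (t : ℕ → G) (ht : Tendsto t atTop (𝓝 1))
    (hnull : ∀ n, μ (K * {t n}) = 0) :
    ∃ C : Set G, MeasurableSet C ∧ C ⊆ K ∧ μ (K \ C) = 0 ∧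
      interior (C⁻¹ * C) = ∅ := by
  obtain ⟨C₀, hC₀K, hC₀, hKC₀, hdisj₀⟩ := exists_subset_disjoint_mul_singleton
    hK.measurableSet (t := t) fun n => measure_mono_null inter_subset_right (hnull n)
  by_cases hint : interior (C₀⁻¹ * C₀) = ∅
  · exact ⟨C₀, hC₀, hC₀K, hKC₀, hint⟩
  -- `K⁻¹ * K` is a compact neighbourhood of `x`.
  obtain ⟨x, hx⟩ := nonempty_iff_ne_empty.2 hint
  have : LocallyCompactSpace G := (hK.inv.mul hK).locallyCompactSpace_of_mem_nhds_of_group <|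
    mem_of_superset (mem_interior_iff_mem_nhds.1 hx) (mul_subset_mul (inv_subset_inv.2 hC₀K) hC₀K)
  have hhaar : Measure.haar C₀⁻¹ = 0 := measure_inv_eq_zero_of_inv_mul_self_notMem_nhds _ hC₀
    fun h => (ht.eventually_mem h).exists.elim fun n hn =>
      mem_inv_mul_self_iff_not_disjoint.1 hn (hdisj₀ n)
  have : IsFiniteMeasure (μ.restrict C₀) :=
    isFiniteMeasure_restrict.2 ((measure_mono hC₀K).trans_lt hK.measure_lt_top).ne
  obtain ⟨C, hCC₀, hC, hC₀C, hint⟩ := exists_subset_interior_inv_mul_self_eq_empty hC₀ <|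
    Measure.dense_of_ae <| (ae_measure_inter_mul_singleton_eq_zero (ν := μ.restrict C₀) hC₀
      hhaar).mono fun s hs => by rwa [Measure.restrict_eq_self _ inter_subset_left] at hs
  refine ⟨C, hC, hCC₀.trans hC₀K, ?_, hint⟩
  rw [← sdiff_union_sdiff_cancel hC₀K hCC₀]
  exact measure_union_null hKC₀ hC₀C

/-- Mospan converse: if `μ(K) > 0` but `μ(K t_n) = 0` along some null
sequence, then `K` has a full-measure Borel subset `C` with `C⁻¹C` having
empty interior. -/
theorem mospan_converse
    {G : Type*} [Group G] [TopologicalSpace G] [PolishSpace G]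
    [IsTopologicalGroup G] [MeasurableSpace G] [BorelSpace G]
    (μ : Measure G) [μ.Regular]
    (K : Set G) (hK : IsCompact K) (hKpos : 0 < μ K)
    (t : ℕ → G) (ht : Tendsto t atTop (𝓝 1))
    (hnull : ∀ n, μ (K * {t n}) = 0) :
    ∃ C : Set G, MeasurableSet C ∧ C ⊆ K ∧ μ (K \ C) = 0 ∧
      interior (C⁻¹ * C) = ∅ :=
  mospan_converse_general μ K hK t ht hnull
end

section
/- (Self-intersection Lemma.) Let G be a Polish group, μ a Borel probability measure, and E a universally measurable set that is not Haar null. Set μ̂(E) := sup{μ(gEh) : g,h ∈ G} and ‖x‖_E := μ̂(xE △ E). Then for every ε with 0 < ε < μ̂(E), the 'ball' {x ∈ G : ‖x‖_E < ε} is contained in EE⁻¹; equivalently, E ∩ xE ≠ ∅ whenever ‖x‖_E < ε. -/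
open Set Filter Topology Pointwise MeasureTheory
open scoped symmDiff

/-- A set is universally measurable if it is measurable with respect to every
Borel probability measure. -/
def UnivMeas {G : Type*} [MeasurableSpace G] (B : Set G) : Prop :=
  ∀ ν : Measure G, IsProbabilityMeasure ν → NullMeasurableSet B ν

/-- Two-sided translate `gEh`. -/
def biTranslate {G : Type*} [Group G] (g h : G) (E : Set G) : Set G :=
  (fun e => g * e * h) '' E

/-- `E` is Haar null. -/
def IsHaarNull {G : Type*} [Group G] [MeasurableSpace G] (E : Set G) : Prop :=
  ∃ B : Set G, UnivMeas B ∧ E ⊆ B ∧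
    ∃ ν : Measure G, IsProbabilityMeasure ν ∧ ∀ g h : G, ν (biTranslate g h B) = 0

/-- The submeasure `μ̂(E) = sup{μ(gEh)}`. -/
noncomputable def hatMeasure {G : Type*} [Group G] [MeasurableSpace G]
    (μ : Measure G) (E : Set G) : ENNReal :=
  ⨆ (g : G) (h : G), μ (biTranslate g h E)

theorem Set.mem_mul_inv_of_smul_inter_nonempty {α : Type*} [Group α] {s : Set α} {x : α}
    (h : (x • s ∩ s).Nonempty) : x ∈ s * s⁻¹ := by
  obtain ⟨a, b, ⟨ha, hb⟩, rfl⟩ := smul_inter_nonempty_iff.mp h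
  exact mul_mem_mul ha (inv_mem_inv.mpr hb)

section hatMeasure

variable {G : Type*} [Group G] [MeasurableSpace G] (μ : Measure G)

theorem hatMeasure_mono {E F : Set G} (hEF : E ⊆ F) : hatMeasure μ E ≤ hatMeasure μ F :=
  iSup₂_mono fun _ _ => measure_mono (image_mono hEF)

theorem hatMeasure_le_smul_symmDiff_of_disjoint {E : Set G} {x : G} (hx : Disjoint (x • E) E) :
    hatMeasure μ E ≤ hatMeasure μ ((x • E) ∆ E) := by
  rw [hx.symmDiff_eq_sup]
  exact hatMeasure_mono μ subset_union_right

theorem smul_inter_nonempty_of_hatMeasure_smul_symmDiff_lt {E : Set G} {x : G}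
    (hx : hatMeasure μ ((x • E) ∆ E) < hatMeasure μ E) : (x • E ∩ E).Nonempty :=
  not_disjoint_iff_nonempty_inter.mp fun hdisj =>
    (hatMeasure_le_smul_symmDiff_of_disjoint μ hdisj).not_gt hx

end hatMeasure

theorem self_intersection_general
    {G : Type*} [Group G] [MeasurableSpace G]
    (μ : Measure G)
    (E : Set G)
    (ε : ENNReal) (hεE : ε < hatMeasure μ E) :
    ∀ x : G, hatMeasure μ ((x • E) ∆ E) < ε →
      x ∈ E * E⁻¹ ∧ (E ∩ x • E).Nonempty := by
  intro x hx
  have hmeet := smul_inter_nonempty_of_hatMeasure_smul_symmDiff_lt μ (hx.trans hεE)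
  exact ⟨mem_mul_inv_of_smul_inter_nonempty hmeet, inter_comm E (x • E) ▸ hmeet⟩

/-- Self-intersection lemma: for non-Haar-null universally measurable `E` and
`0 < ε < μ̂(E)`, the ball `{x : μ̂(xE △ E) < ε}` lies inside `EE⁻¹`;
equivalently `E ∩ xE ≠ ∅` for such `x`. -/
theorem self_intersection
    {G : Type*} [Group G] [TopologicalSpace G] [PolishSpace G]
    [IsTopologicalGroup G] [MeasurableSpace G] [BorelSpace G]
    (μ : Measure G) [IsProbabilityMeasure μ]
    (E : Set G) (hE : UnivMeas E) (hEn : ¬ IsHaarNull E)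
    (ε : ENNReal) (hε : 0 < ε) (hεE : ε < hatMeasure μ E) :
    ∀ x : G, hatMeasure μ ((x • E) ∆ E) < ε →
      x ∈ E * E⁻¹ ∧ (E ∩ x • E).Nonempty :=
  self_intersection_general μ E ε hεE
end

section
/- (Left Lebesgue decomposition.) Let G be a Polish group and μ, ν σ-finite regular Borel measures on G. Then there exist measures ν_a and ν_s with ν = ν_a + ν_s such that ν_a(N) = 0 for every left μ-null set N, and ν_s is concentrated on a universally measurable set B with μ(gB) = 0 for all g ∈ G. -/
/-!
Exhaustion. Replace `ν` by an equivalent finite measure `p`. The universally measurable sets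
all of whose left translates are `μ`-null are closed under countable unions, so `p` attains its
supremum on this family at some member `B`; maximality forces `p (C \ B) = 0` for every other
member `C`. Then `ν_s = ν|B` and `ν_a = ν|Bᶜ`.
-/

open Set Filter Topology Pointwise MeasureTheory

/-- `N` is left `μ`-null: covered by a universally measurable `B` with all
left translates `gB` of `μ`-measure zero. -/
def IsLeftNull {G : Type*} [Group G] [MeasurableSpace G]
    (μ : Measure G) (N : Set G) : Prop :=
  ∃ B : Set G, UnivMeas B ∧ N ⊆ B ∧ ∀ g : G, μ (g • B) = 0

namespace MeasureTheory

variable {α : Type*} [MeasurableSpace α]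

theorem Measure.restrict_compl_add_restrict₀ {μ : Measure α} {s : Set α}
    (hs : NullMeasurableSet s μ) : μ.restrict sᶜ + μ.restrict s = μ := by
  rw [Measure.restrict_congr_set hs.toMeasurable_ae_eq.symm,
    Measure.restrict_congr_set hs.toMeasurable_ae_eq.symm.compl,
    Measure.restrict_compl_add_restrict (measurableSet_toMeasurable μ s)]

theorem Measure.exists_forall_measure_diff_eq_zero (p : Measure α) [IsFiniteMeasure p]
    {P : Set α → Prop} (hP : ∀ S : Set (Set α), S.Countable → (∀ s ∈ S, P s) → P (⋃₀ S))
    (hmeas : ∀ s, P s → NullMeasurableSet s p) :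
    ∃ B, P B ∧ ∀ C, P C → p (C \ B) = 0 := by
  have hne : (p '' {s | P s}).Nonempty :=
    ⟨_, mem_image_of_mem p (show P (⋃₀ ∅) from hP ∅ countable_empty (by simp))⟩
  obtain ⟨u, -, hu, hus⟩ := exists_seq_tendsto_sSup hne (OrderTop.bddAbove _)
  choose s hsP hsu using hus
  have hB : P (⋃ n, s n) := by
    rw [← sUnion_range]
    exact hP _ (countable_range s) (forall_mem_range.2 hsP)
  set B := ⋃ n, s n
  have hmax : ∀ C, P C → p C ≤ p B := fun C hC =>
    calc p C ≤ sSup (p '' {s | P s}) := le_sSup (mem_image_of_mem p hC)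
      _ ≤ p B := le_of_tendsto' hu fun n => hsu n ▸ measure_mono (subset_iUnion s n)
  refine ⟨B, hB, fun C hC => ?_⟩
  have hBC : P (B ∪ C) := (sUnion_pair B C).symm ▸
    hP {B, C} ((countable_singleton C).insert B) (by simp [hB, hC])
  have hsplit : p B + p (C \ B) ≤ p B + 0 := by
    rw [add_zero, ← measure_union₀' (hmeas B hB) disjoint_sdiff_right.aedisjoint,
      union_sdiff_self]
    exact hmax _ hBC
  exact nonpos_iff_eq_zero.1 ((ENNReal.add_le_add_iff_left (measure_ne_top p B)).1 hsplit)

theorem measure_smul_sUnion_eq_zero {G : Type*} [SMul G α] (μ : Measure α)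
    {S : Set (Set α)} (hS : S.Countable) (h : ∀ s ∈ S, ∀ g : G, μ (g • s) = 0) (g : G) :
    μ (g • ⋃₀ S) = 0 := by
  rw [smul_set_sUnion]
  exact (measure_biUnion_null_iff hS).2 fun s hs => h s hs g

end MeasureTheory

theorem UnivMeas.sUnion {α : Type*} [MeasurableSpace α] {S : Set (Set α)} (hS : S.Countable)
    (h : ∀ s ∈ S, UnivMeas s) : UnivMeas (⋃₀ S) :=
  fun ν hν => NullMeasurableSet.sUnion hS fun s hs => h s hs ν hν

theorem UnivMeas.nullMeasurableSet {α : Type*} [MeasurableSpace α] {s : Set α}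
    (hs : UnivMeas s) (ν : Measure α) [SFinite ν] : NullMeasurableSet s ν := by
  rcases eq_zero_or_neZero ν with rfl | _
  · exact NullMeasurableSet.of_null (by simp)
  · exact (hs _ inferInstance).mono_ac (absolutelyContinuous_toFinite ν)

theorem left_lebesgue_decomposition_general
    {G : Type*} [Group G] [MeasurableSpace G]
    (μ ν : Measure G) [SigmaFinite ν] :
    ∃ νa νs : Measure G, ν = νa + νs ∧
      (∀ N : Set G, IsLeftNull μ N → νa N = 0) ∧
      ∃ B : Set G, UnivMeas B ∧ (∀ g : G, μ (g • B) = 0) ∧ νs Bᶜ = 0 := by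
  obtain ⟨B, ⟨hBu, hBnull⟩, hBmax⟩ :=
    ν.toFinite.exists_forall_measure_diff_eq_zero
      (P := fun s => UnivMeas s ∧ ∀ g : G, μ (g • s) = 0)
      (fun S hS h => ⟨UnivMeas.sUnion hS fun s hs => (h s hs).1,
        measure_smul_sUnion_eq_zero μ hS fun s hs => (h s hs).2⟩)
      (fun s hs => hs.1.nullMeasurableSet _)
  have hB : NullMeasurableSet B ν := hBu.nullMeasurableSet ν
  refine ⟨ν.restrict Bᶜ, ν.restrict B, (Measure.restrict_compl_add_restrict₀ hB).symm,
    ?_, B, hBu, hBnull, mem_ae_iff.1 (ae_restrict_mem₀ hB)⟩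
  rintro N ⟨C, hCu, hNC, hCnull⟩
  refine measure_mono_null hNC ?_
  rw [Measure.restrict_apply₀' hB.compl, ← sdiff_eq]
  exact toFinite_apply_eq_zero_iff.1 (hBmax C ⟨hCu, hCnull⟩)

/-- Left Lebesgue decomposition: `ν = ν_a + ν_s` with `ν_a` vanishing on
left `μ`-null sets and `ν_s` concentrated on a universally measurable set all
of whose left translates are `μ`-null. -/
theorem left_lebesgue_decomposition
    {G : Type*} [Group G] [TopologicalSpace G] [PolishSpace G]
    [IsTopologicalGroup G] [MeasurableSpace G] [BorelSpace G]
    (μ ν : Measure G) [SigmaFinite μ] [SigmaFinite ν] [μ.Regular] [ν.Regular] :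
    ∃ νa νs : Measure G, ν = νa + νs ∧
      (∀ N : Set G, IsLeftNull μ N → νa N = 0) ∧
      ∃ B : Set G, UnivMeas B ∧ (∀ g : G, μ (g • B) = 0) ∧ νs Bᶜ = 0 :=
  left_lebesgue_decomposition_general μ ν
end

section
/- (Simmons–Mospan theorem, forward direction.) Let G be a locally compact Polish group with left Haar measure η and μ a regular Borel measure on G with μ ≪ η (absolutely continuous). Then μ has the Steinhaus–Weil property: for every Borel set B with μ(B) > 0, the identity 1_G is an interior point of B⁻¹B. -/
/-!
Steinhaus' theorem gives `E / E ∈ 𝓝 1` for every measurable `E` of positive Haar measure. Applied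
to `E = B⁻¹`, which is Haar-positive together with `B`, this yields `B⁻¹ * B ∈ 𝓝 1`; and a set of
positive `μ`-measure has positive Haar measure when `μ ≪ η`.
-/

open Set Filter Topology Pointwise MeasureTheory

section SteinhausWeil

variable {G : Type*} [Group G] [TopologicalSpace G] [IsTopologicalGroup G]
  [LocallyCompactSpace G] [SecondCountableTopology G] [MeasurableSpace G] [BorelSpace G]

theorem inv_mul_mem_nhds_one_of_haar_pos (η : Measure G) [η.IsHaarMeasure] {B : Set G}
    (hB : MeasurableSet B) (hpos : 0 < η B) : B⁻¹ * B ∈ 𝓝 (1 : G) := by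
  have hinv_pos : 0 < η B⁻¹ := by
    rw [pos_iff_ne_zero, Ne, measure_inv_null]
    exact hpos.ne'
  simpa only [div_eq_mul_inv, inv_inv] using
    Measure.div_mem_nhds_one_of_haar_pos η B⁻¹ hB.inv hinv_pos

theorem inv_mul_mem_nhds_one_of_absolutelyContinuous (η : Measure G) [η.IsHaarMeasure]
    {μ : Measure G} (hac : μ ≪ η) {B : Set G} (hB : MeasurableSet B) (hpos : 0 < μ B) :
    B⁻¹ * B ∈ 𝓝 (1 : G) :=
  inv_mul_mem_nhds_one_of_haar_pos η hB (hac.pos_mono hpos)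

end SteinhausWeil

theorem simmons_mospan_forward_general
    {G : Type*} [Group G] [TopologicalSpace G] [PolishSpace G]
    [IsTopologicalGroup G] [LocallyCompactSpace G]
    [MeasurableSpace G] [BorelSpace G]
    (η : Measure G) [η.IsHaarMeasure]
    (μ : Measure G) (hac : μ ≪ η) :
    ∀ B : Set G, MeasurableSet B → 0 < μ B →
      (1 : G) ∈ interior (B⁻¹ * B) := fun _ hB hpos =>
  mem_interior_iff_mem_nhds.mpr (inv_mul_mem_nhds_one_of_absolutelyContinuous η hac hB hpos)

/-- Simmons–Mospan theorem, forward direction: a regular Borel measure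
absolutely continuous with respect to Haar measure has the Steinhaus–Weil
property. -/
theorem simmons_mospan_forward
    {G : Type*} [Group G] [TopologicalSpace G] [PolishSpace G]
    [IsTopologicalGroup G] [LocallyCompactSpace G]
    [MeasurableSpace G] [BorelSpace G]
    (η : Measure G) [η.IsHaarMeasure]
    (μ : Measure G) [μ.Regular] (hac : μ ≪ η) :
    ∀ B : Set G, MeasurableSet B → 0 < μ B →
      (1 : G) ∈ interior (B⁻¹ * B) :=
  simmons_mospan_forward_general η μ hac
end

section
/- (After Simmons.) Let G be a separable metrizable group, μ, ν regular Borel measures, and K ⊆ G a compact set carrying ν (ν(G \ K) = 0) such that ν(xK) = 0 for a dense set of x ∈ G. Then there is a Borel set B ⊆ K with ν(K \ B) = 0 such that BB⁻¹ has empty interior. -/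
open Set Filter Topology Pointwise MeasureTheory

theorem Dense.exists_countable_dense_subset_of_separable {X : Type*} [TopologicalSpace X]
    [TopologicalSpace.SeparableSpace X] [TopologicalSpace.PseudoMetrizableSpace X]
    {s : Set X} (hs : Dense s) : ∃ t ⊆ s, t.Countable ∧ Dense t :=
  haveI := (TopologicalSpace.IsSeparable.of_separableSpace s).separableSpace
  hs.exists_countable_dense_subset

theorem Set.notMem_mul_inv_of_disjoint_smul {G : Type*} [Group G] {s : Set G} {d : G}
    (h : Disjoint s (d • s)) : d ∉ s * s⁻¹ := by
  rintro ⟨a, ha, b, hb, rfl⟩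
  refine h.ne_of_mem ha ⟨b⁻¹, by simpa using hb, ?_⟩ rfl
  simp

theorem interior_mul_inv_eq_empty_of_dense_disjoint_smul {G : Type*} [Group G]
    [TopologicalSpace G] {s D : Set G} (hD : Dense D) (h : ∀ d ∈ D, Disjoint s (d • s)) :
    interior (s * s⁻¹) = ∅ :=
  interior_eq_empty_iff_dense_compl.2 <|
    hD.mono fun d hd => notMem_mul_inv_of_disjoint_smul (h d hd)

theorem simmons_lemma_general
    {G : Type*} [Group G] [TopologicalSpace G]
    [TopologicalSpace.SeparableSpace G] [TopologicalSpace.MetrizableSpace G]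
    [MeasurableSpace G] [BorelSpace G]
    (ν : Measure G)
    (K : Set G) (hK : IsCompact K)
    (hdense : Dense {x : G | ν (x • K) = 0}) :
    ∃ B : Set G, MeasurableSet B ∧ B ⊆ K ∧ ν (K \ B) = 0 ∧
      interior (B * B⁻¹) = ∅ := by
  obtain ⟨D, hDnull, hDcount, hDdense⟩ := hdense.exists_countable_dense_subset_of_separable
  -- `K` minus a measurable null hull of `⋃ d ∈ D, dK` is disjoint from its `D`-translates.
  set N := toMeasurable ν (⋃ d ∈ D, d • K)
  have hN : ν N = 0 := by
    rw [measure_toMeasurable]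
    exact (measure_biUnion_null_iff hDcount).2 hDnull
  refine ⟨K \ N, hK.isClosed.measurableSet.diff (measurableSet_toMeasurable _ _), sdiff_subset,
    measure_mono_null ((sdiff_sdiff_right_self K N).trans_subset inter_subset_right) hN,
    interior_mul_inv_eq_empty_of_dense_disjoint_smul hDdense fun d hd => ?_⟩
  have hdK : d • K ⊆ N :=
    (subset_biUnion_of_mem (u := fun d => d • K) hd).trans (subset_toMeasurable _ _)
  exact disjoint_left.2 fun x hx hdx =>
    hx.2 (hdK (smul_set_mono sdiff_subset hdx))

/-- After Simmons: if a compact set `K` carries `ν` and `ν(xK) = 0` for a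
dense set of `x`, then some Borel `B ⊆ K` of full `ν`-measure in `K` has
`BB⁻¹` with empty interior. -/
theorem simmons_lemma
    {G : Type*} [Group G] [TopologicalSpace G] [IsTopologicalGroup G]
    [TopologicalSpace.SeparableSpace G] [TopologicalSpace.MetrizableSpace G]
    [MeasurableSpace G] [BorelSpace G]
    (μ ν : Measure G) [μ.Regular] [ν.Regular]
    (K : Set G) (hK : IsCompact K) (hcarry : ν Kᶜ = 0)
    (hdense : Dense {x : G | ν (x • K) = 0}) :
    ∃ B : Set G, MeasurableSet B ∧ B ⊆ K ∧ ν (K \ B) = 0 ∧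
      interior (B * B⁻¹) = ∅ :=
  simmons_lemma_general ν K hK hdense
end

section
/- (Almost Inclusion-Exclusion.) Let G be a Polish group, μ a Borel probability measure, and E, F μ-measurable sets with μ(E) > 0 and μ(F) > 0. Then μ(xE △ E) = 0 for μ-almost all x ∈ F if and only if both: (i) μ(F \ xE⁻¹) = 0 for μ-almost all x ∈ E, and (ii) μ(F ∩ xE⁻¹) = 0 for μ-almost all x ∉ E. -/
/-!
With `p x y := x ∈ F → y ∉ xE ∆ E`, the left side says `∀ᵐ x, ∀ᵐ y, p x y`. Fubini for null sets
swaps this to `∀ᵐ y, ∀ᵐ x, p x y`, and since `y ∈ xE ↔ x ∈ yE⁻¹`, for fixed `y ∈ E` (resp.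
`y ∉ E`) the inner statement says exactly that `F \ yE⁻¹` (resp. `F ∩ yE⁻¹`) is null.
-/

open Set Filter Topology Pointwise MeasureTheory
open scoped symmDiff

theorem Filter.eventually_iff_eventually_mem_and_eventually_notMem {α : Type*} {l : Filter α}
    {p : α → Prop} (s : Set α) :
    (∀ᶠ x in l, p x) ↔ (∀ᶠ x in l, x ∈ s → p x) ∧ (∀ᶠ x in l, x ∉ s → p x) :=
  ⟨fun h ↦ ⟨h.mono fun _ hx _ ↦ hx, h.mono fun _ hx _ ↦ hx⟩,
    fun ⟨hs, hsc⟩ ↦ (hs.and hsc).mono fun x hx ↦ (em (x ∈ s)).elim hx.1 hx.2⟩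

theorem measurableSet_setOf_mem_smul {G α : Type*} [Group G] [MulAction G α]
    [MeasurableSpace G] [MeasurableSpace α] [MeasurableInv G] [MeasurableSMul₂ G α]
    {E : Set α} (hE : MeasurableSet E) : MeasurableSet {q : G × α | q.2 ∈ q.1 • E} := by
  simp_rw [mem_smul_set_iff_inv_smul_mem]
  exact (measurable_fst.inv.smul measurable_snd) hE

section

variable {G : Type*} [Group G] [MeasurableSpace G] {μ : Measure G} {E F : Set G} {y : G}

theorem ae_mem_imp_notMem_smul_symmDiff_iff_of_mem (hy : y ∈ E) :
    (∀ᵐ x ∂μ, x ∈ F → y ∉ (x • E) ∆ E) ↔ μ (F \ y • E⁻¹) = 0 := by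
  simp [measure_eq_zero_iff_ae_notMem, mem_symmDiff, hy]

theorem ae_mem_imp_notMem_smul_symmDiff_iff_of_notMem (hy : y ∉ E) :
    (∀ᵐ x ∂μ, x ∈ F → y ∉ (x • E) ∆ E) ↔ μ (F ∩ y • E⁻¹) = 0 := by
  simp [measure_eq_zero_iff_ae_notMem, mem_symmDiff, hy]

end

theorem almost_inclusion_exclusion_general
    {G : Type*} [Group G] [TopologicalSpace G] [PolishSpace G]
    [IsTopologicalGroup G] [MeasurableSpace G] [BorelSpace G]
    (μ : Measure G) [IsProbabilityMeasure μ]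
    (E F : Set G) (hE : MeasurableSet E) (hF : MeasurableSet F) :
    (∀ᵐ x ∂μ, x ∈ F → μ ((x • E) ∆ E) = 0) ↔
      ((∀ᵐ x ∂μ, x ∈ E → μ (F \ x • E⁻¹) = 0) ∧
        (∀ᵐ x ∂μ, x ∉ E → μ (F ∩ x • E⁻¹) = 0)) := by
  have hmeas : MeasurableSet {q : G × G | q.1 ∈ F → q.2 ∉ (q.1 • E) ∆ E} := by
    convert (measurable_fst hF).compl.union
      ((measurableSet_setOf_mem_smul hE).symmDiff (measurable_snd hE)).compl using 1
    ext
    simp only [mem_ofPred_eq, mem_union, mem_compl_iff, mem_preimage, mem_symmDiff]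
    tauto
  calc (∀ᵐ x ∂μ, x ∈ F → μ ((x • E) ∆ E) = 0)
      ↔ ∀ᵐ x ∂μ, ∀ᵐ y ∂μ, x ∈ F → y ∉ (x • E) ∆ E := by
        simp only [measure_eq_zero_iff_ae_notMem, eventually_imp_distrib_left]
    _ ↔ ∀ᵐ y ∂μ, ∀ᵐ x ∂μ, x ∈ F → y ∉ (x • E) ∆ E := Measure.ae_ae_comm hmeas
    _ ↔ _ := by
        rw [eventually_iff_eventually_mem_and_eventually_notMem E]
        refine and_congr (eventually_congr ?_) (eventually_congr ?_) <;>
          filter_upwards with y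
        · exact forall_congr' ae_mem_imp_notMem_smul_symmDiff_iff_of_mem
        · exact forall_congr' ae_mem_imp_notMem_smul_symmDiff_iff_of_notMem

/-- Almost Inclusion-Exclusion: `μ(xE △ E) = 0` for `μ`-a.a. `x ∈ F` iff
`F` is `μ`-almost covered by `xE⁻¹` for `μ`-a.a. `x ∈ E` and `μ`-almost
disjoint from `xE⁻¹` for `μ`-a.a. `x ∉ E`. -/
theorem almost_inclusion_exclusion
    {G : Type*} [Group G] [TopologicalSpace G] [PolishSpace G]
    [IsTopologicalGroup G] [MeasurableSpace G] [BorelSpace G]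
    (μ : Measure G) [IsProbabilityMeasure μ]
    (E F : Set G) (hE : MeasurableSet E) (hF : MeasurableSet F)
    (hEpos : 0 < μ E) (hFpos : 0 < μ F) :
    (∀ᵐ x ∂μ, x ∈ F → μ ((x • E) ∆ E) = 0) ↔
      ((∀ᵐ x ∂μ, x ∈ E → μ (F \ x • E⁻¹) = 0) ∧
        (∀ᵐ x ∂μ, x ∉ E → μ (F ∩ x • E⁻¹) = 0)) :=
  almost_inclusion_exclusion_general μ E F hE hF
end
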